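/- arXiv:1605.05590 — 9 statements merged into one kernel-verified Lean document; each statement's English description precedes it below -/
import Mathlib

section
/- For any finite set S in a metric space and integer k with 1 ≤ k < |S|, the optimal k-center range r*_k is at most the optimal k-farness ρ*_k, i.e., min over k-subsets T of max_{p∈S\T} d(p,T) is at most max over k-subsets T of min_{c∈T} d(c, T\{c}). -/
open ENNReal

/-!
Let `ρ` be the optimal farness and assume `ρ < ∞`. A maximal `ρ`-separated subset `T₀` of `S` is a
`ρ`-cover of `S`. Any `k` of its points would form a `k`-subset of farness `> ρ`, so `|T₀| ≤ k`;
padding `T₀` with points of `S` to a `k`-subset `T` can only shrink distances to `T`, so the range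
of `T` is still at most `ρ`.
-/

open Metric
open scoped NNReal

namespace Finset

variable {α : Type*} [PseudoEMetricSpace α]

theorem exists_isSeparated_isCover (S : Finset α) (r : ℝ≥0) :
    ∃ T ⊆ S, IsSeparated r (T : Set α) ∧ IsCover r (S : Set α) T := by
  have hpacking : packingNumber r (S : Set α) ≠ ⊤ :=
    ((packingNumber_le_encard_self _).trans_lt S.finite_toSet.encard_lt_top).ne
  obtain ⟨T, hT⟩ := (S.finite_toSet.subset (maximalSeparatedSet_subset (ε := r))).exists_finset_coe
  refine ⟨T, ?_, ?_, ?_⟩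
  · exact coe_subset.mp (hT ▸ maximalSeparatedSet_subset)
  · exact hT ▸ isSeparated_maximalSeparatedSet
  · exact hT ▸ isCover_maximalSeparatedSet hpacking

variable [DecidableEq α]

/-- The range `r_T` of the centers `T` on the point set `S`. -/
noncomputable def centerRange (S T : Finset α) : ℝ≥0∞ := ⨆ p ∈ S \ T, ⨅ c ∈ T, edist p c

noncomputable def farness (T : Finset α) : ℝ≥0∞ := ⨅ c ∈ T, ⨅ c' ∈ T.erase c, edist c c'

theorem lt_farness_of_isSeparated {T : Finset α} {r : ℝ≥0∞} (hr : r ≠ ⊤)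
    (hT : IsSeparated r (T : Set α)) : r < T.farness := by
  simp only [farness, ← inf_eq_iInf]
  refine (Finset.lt_inf_iff hr.lt_top).2 fun c hc =>
    (Finset.lt_inf_iff hr.lt_top).2 fun c' hc' => ?_
  exact hT hc (mem_of_mem_erase hc') (ne_of_mem_erase hc').symm

theorem centerRange_le_of_isCover {S T₀ T : Finset α} {r : ℝ≥0} (hT₀T : T₀ ⊆ T)
    (hcover : IsCover r (S : Set α) T₀) : S.centerRange T ≤ r := by
  refine iSup₂_le fun p hp => ?_
  obtain ⟨c, hc, hpc⟩ := hcover (mem_sdiff.mp hp).1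
  exact (iInf₂_le c (hT₀T hc)).trans hpc

theorem card_le_of_isSeparated {S T : Finset α} {k : ℕ} {r : ℝ≥0∞} (hr : r ≠ ⊤)
    (hfar : ∀ U ∈ S.powersetCard k, U.farness ≤ r) (hTS : T ⊆ S)
    (hT : IsSeparated r (T : Set α)) : T.card ≤ k := by
  by_contra! hk
  obtain ⟨U, hUT, hUk⟩ := exists_subset_card_eq hk.le
  have hU : U ∈ S.powersetCard k := mem_powersetCard.mpr ⟨hUT.trans hTS, hUk⟩
  exact (hfar U hU).not_gt (lt_farness_of_isSeparated hr (hT.subset (coe_subset.mpr hUT)))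

end Finset

open Finset in
theorem stmt_1_general {α : Type*} [MetricSpace α] [DecidableEq α] (S : Finset α) (k : ℕ)
    (hk2 : k < S.card) :
    (⨅ T ∈ S.powersetCard k, ⨆ p ∈ S \ T, ⨅ c ∈ T, edist p c)
      ≤ ⨆ T ∈ S.powersetCard k, ⨅ c ∈ T, ⨅ c' ∈ T.erase c, edist c c' := by
  change (⨅ T ∈ S.powersetCard k, S.centerRange T) ≤ ⨆ T ∈ S.powersetCard k, T.farness
  obtain hρ | hρ := eq_or_ne (⨆ T ∈ S.powersetCard k, T.farness) ⊤
  · exact hρ ▸ le_top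
  obtain ⟨r, hr⟩ : ∃ r : ℝ≥0, (r : ℝ≥0∞) = ⨆ T ∈ S.powersetCard k, T.farness :=
    ⟨_, coe_toNNReal hρ⟩
  have hfar : ∀ U ∈ S.powersetCard k, U.farness ≤ r :=
    fun U hU => hr ▸ le_iSup₂ (f := fun T _ => farness T) U hU
  obtain ⟨T₀, hT₀S, hsep, hcover⟩ := S.exists_isSeparated_isCover r
  obtain ⟨T, hT₀T, hTS, hTk⟩ :=
    exists_subsuperset_card_eq hT₀S (card_le_of_isSeparated coe_ne_top hfar hT₀S hsep) hk2.le
  rw [← hr]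
  exact (iInf₂_le T (mem_powersetCard.mpr ⟨hTS, hTk⟩)).trans (centerRange_le_of_isCover hT₀T hcover)

/-- For a finite set `S` and `1 ≤ k < |S|`, the optimal k-center range `r*_k`
(min over k-subsets `T` of `max_{p ∈ S \ T} d(p,T)`) is at most the optimal
k-farness `ρ*_k` (max over k-subsets `T` of `min_{c ∈ T} d(c, T \ {c})`). -/
theorem stmt_1 {α : Type*} [MetricSpace α] [DecidableEq α] (S : Finset α) (k : ℕ)
    (hk1 : 1 ≤ k) (hk2 : k < S.card) :
    (⨅ T ∈ S.powersetCard k, ⨆ p ∈ S \ T, ⨅ c ∈ T, edist p c)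
      ≤ ⨆ T ∈ S.powersetCard k, ⨅ c ∈ T, ⨅ c' ∈ T.erase c, edist c c' :=
  stmt_1_general S k hk2
end

section
/- The set T produced by the greedy farthest-point algorithm GMM satisfies the anticover property: r_T ≤ ρ_T, i.e., every point of S is within distance ρ_T of T, where ρ_T is the minimum pairwise distance within T. -/
open ENNReal

theorem iInf_edist_le_edist_of_greedy {α : Type*} [EDist α] {S : Finset α} {k : ℕ} {c : ℕ → α}
    (hgreedy : ∀ j, 0 < j → j < k → ∀ q ∈ S,
      (⨅ i ∈ Finset.range j, edist q (c i)) ≤ ⨅ i ∈ Finset.range j, edist (c j) (c i))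
    {p : α} (hp : p ∈ S) {m n : ℕ} (hm : m < k) (hnm : n < m) :
    (⨅ i ∈ Finset.range k, edist p (c i)) ≤ edist (c m) (c n) :=
  calc (⨅ i ∈ Finset.range k, edist p (c i))
      ≤ ⨅ i ∈ Finset.range m, edist p (c i) :=
        biInf_mono fun _ hi => Finset.range_subset_range.2 hm.le hi
    _ ≤ ⨅ i ∈ Finset.range m, edist (c m) (c i) := hgreedy m (n.zero_le.trans_lt hnm) hm p hp
    _ ≤ edist (c m) (c n) := iInf₂_le n (Finset.mem_range.2 hnm)

theorem stmt_2_general {α : Type*} [MetricSpace α] (S : Finset α) (k : ℕ) (c : ℕ → α)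
    (hgreedy : ∀ j, 0 < j → j < k → ∀ q ∈ S,
      (⨅ i ∈ Finset.range j, edist q (c i)) ≤ ⨅ i ∈ Finset.range j, edist (c j) (c i)) :
    ∀ p ∈ S, (⨅ i ∈ Finset.range k, edist p (c i)) ≤
      ⨅ i ∈ Finset.range k, ⨅ j ∈ (Finset.range k).erase i, edist (c i) (c j) := by
  intro p hp
  refine le_iInf₂ fun i hi => le_iInf₂ fun j hj => ?_
  obtain ⟨hji, hj⟩ := Finset.mem_erase.1 hj
  rcases hji.lt_or_gt with hlt | hgt
  · exact iInf_edist_le_edist_of_greedy hgreedy hp (Finset.mem_range.1 hi) hlt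
  · rw [edist_comm]
    exact iInf_edist_le_edist_of_greedy hgreedy hp (Finset.mem_range.1 hj) hgt

/-- Anticover property of the greedy farthest-point algorithm GMM: if
`c 0, …, c (k-1)` is a greedy run on `S` (each point maximizes its distance to the
previously selected ones), then every point of `S` is within distance `ρ_T` of
`T = {c 0, …, c (k-1)}`, where `ρ_T` is the minimum pairwise distance within `T`. -/
theorem stmt_2 {α : Type*} [MetricSpace α] (S : Finset α) (k : ℕ) (c : ℕ → α)
    (hmem : ∀ j < k, c j ∈ S)
    (hgreedy : ∀ j, 0 < j → j < k → ∀ q ∈ S,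
      (⨅ i ∈ Finset.range j, edist q (c i)) ≤ ⨅ i ∈ Finset.range j, edist (c j) (c i)) :
    ∀ p ∈ S, (⨅ i ∈ Finset.range k, edist p (c i)) ≤
      ⨅ i ∈ Finset.range k, ⨅ j ∈ (Finset.range k).erase i, edist (c i) (c j) :=
  stmt_2_general S k c hgreedy
end

section
/- The greedy farthest-point algorithm GMM is a 2-approximation for the k-center problem: if T = GMM(S,k), then r_T ≤ 2·r*_k. -/
/-
Let `C = {c 0, …, c (k-1)}` be the greedy centres, `p ∈ S`, and `T` any set of at most `k`
points with range `r = max_{q ∈ S} d(q, T)`. Among the `k + 1` points `c 0, …, c (k-1), p`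
two share a nearest point of `T`, so by the triangle inequality they are at distance at most
`2r`. Greediness makes any two of these points at least `d(p, C)` apart: for `i < j < k` the
centre `c j` was chosen farthest from `c 0, …, c (j-1)`, in particular at least as far as `p`.
-/

namespace GreedyKCenter

variable {α : Type*} [PseudoEMetricSpace α] {S : Finset α} {k : ℕ} {c : ℕ → α} {p : α}

/-- `Function.update c k p` lists the points `c 0, …, c (k-1), p` on `0, …, k`. -/
theorem iInf_edist_le_edist_update
    (hgreedy : ∀ j, 0 < j → j < k → ∀ q ∈ S,
      (⨅ i ∈ Finset.range j, edist q (c i)) ≤ ⨅ i ∈ Finset.range j, edist (c j) (c i))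
    (hp : p ∈ S) {i j : ℕ} (hi : i ≤ k) (hj : j ≤ k) (hij : i ≠ j) :
    (⨅ l ∈ Finset.range k, edist p (c l)) ≤
      edist (Function.update c k p i) (Function.update c k p j) := by
  wlog hlt : i < j generalizing i j
  · rw [edist_comm]
    exact this hj hi hij.symm (by omega)
  have hik : i < k := by omega
  rw [Function.update_of_ne hik.ne]
  rcases hj.lt_or_eq with hjk | rfl
  · rw [Function.update_of_ne hjk.ne, edist_comm]
    calc (⨅ l ∈ Finset.range k, edist p (c l))
        ≤ ⨅ l ∈ Finset.range j, edist p (c l) :=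
          biInf_mono fun l hl => Finset.mem_range.2 <| (Finset.mem_range.1 hl).trans hjk
      _ ≤ ⨅ l ∈ Finset.range j, edist (c j) (c l) := hgreedy j (by omega) hjk p hp
      _ ≤ edist (c j) (c i) := iInf₂_le i (Finset.mem_range.2 hlt)
  · rw [Function.update_self, edist_comm]
    exact iInf₂_le i (Finset.mem_range.2 hik)

theorem exists_mem_edist_le_iSup_iInf {T : Finset α} (hT : T.Nonempty) {q : α} (hq : q ∈ S) :
    ∃ t ∈ T, edist q t ≤ ⨆ q ∈ S, ⨅ t ∈ T, edist q t := by
  obtain ⟨t, ht, hmin⟩ := T.exists_min_image (edist q) hT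
  exact ⟨t, ht, (le_iInf₂ hmin).trans (le_iSup₂ (f := fun q _ => ⨅ t ∈ T, edist q t) q hq)⟩

theorem iInf_edist_le_two_mul_iSup_iInf
    (hmem : ∀ j < k, c j ∈ S)
    (hgreedy : ∀ j, 0 < j → j < k → ∀ q ∈ S,
      (⨅ i ∈ Finset.range j, edist q (c i)) ≤ ⨅ i ∈ Finset.range j, edist (c j) (c i))
    (hp : p ∈ S) {T : Finset α} (hTk : T.card ≤ k) :
    (⨅ i ∈ Finset.range k, edist p (c i)) ≤ 2 * ⨆ q ∈ S, ⨅ t ∈ T, edist q t := by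
  set r := ⨆ q ∈ S, ⨅ t ∈ T, edist q t
  rcases T.eq_empty_or_nonempty with rfl | hT
  · have hr : r = ⊤ := top_unique <| le_iSup₂_of_le p hp (by simp)
    simp [hr]
  set x := Function.update c k p
  have hxS : ∀ i ≤ k, x i ∈ S := by
    intro i hi
    rcases hi.lt_or_eq with hik | rfl
    · simpa [x, Function.update_of_ne hik.ne] using hmem i hik
    · simpa [x] using hp
  have : Nonempty α := ⟨p⟩
  choose! t htT htr using fun i (hi : i ≤ k) => exists_mem_edist_le_iSup_iInf hT (hxS i hi)
  obtain ⟨i, hi, j, hj, hij, hti⟩ := Finset.exists_ne_map_eq_of_card_lt_of_maps_to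
    (s := Finset.range (k + 1)) (by simpa using Nat.lt_succ_of_le hTk)
    (fun i hi => htT i (Nat.lt_succ_iff.1 (Finset.mem_range.1 hi)))
  have hi : i ≤ k := Nat.lt_succ_iff.1 (Finset.mem_range.1 hi)
  have hj : j ≤ k := Nat.lt_succ_iff.1 (Finset.mem_range.1 hj)
  calc (⨅ i ∈ Finset.range k, edist p (c i))
      ≤ edist (x i) (x j) := iInf_edist_le_edist_update hgreedy hp hi hj hij
    _ ≤ edist (x i) (t i) + edist (x j) (t j) := by
        rw [hti, edist_comm (x j)]; exact edist_triangle _ _ _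
    _ ≤ r + r := add_le_add (htr i hi) (htr j hj)
    _ = 2 * r := (two_mul r).symm

end GreedyKCenter

theorem stmt_3_general {α : Type*} [MetricSpace α] (S : Finset α) (k : ℕ) (c : ℕ → α)
    (hmem : ∀ j < k, c j ∈ S)
    (hgreedy : ∀ j, 0 < j → j < k → ∀ q ∈ S,
      (⨅ i ∈ Finset.range j, edist q (c i)) ≤ ⨅ i ∈ Finset.range j, edist (c j) (c i)) :
    ∀ p ∈ S, (⨅ i ∈ Finset.range k, edist p (c i)) ≤
      2 * ⨅ T ∈ S.powersetCard k, ⨆ q ∈ S, ⨅ t ∈ T, edist q t := by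
  intro p hp
  simp only [ENNReal.mul_iInf_of_ne two_ne_zero ENNReal.ofNat_ne_top]
  refine le_iInf₂ fun T hT => ?_
  exact GreedyKCenter.iInf_edist_le_two_mul_iSup_iInf hmem hgreedy hp (Finset.mem_powersetCard.1 hT).2.le

/-- GMM is a 2-approximation for k-center: if `c 0, …, c (k-1)` is a greedy
farthest-point run on `S`, then the range of `T = {c 0, …, c (k-1)}` is at most
twice the optimal k-center range `r*_k` of `S`. -/
theorem stmt_3 {α : Type*} [MetricSpace α] (S : Finset α) (k : ℕ) (c : ℕ → α)
    (hk : 1 ≤ k) (hkS : k ≤ S.card)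
    (hmem : ∀ j < k, c j ∈ S)
    (hgreedy : ∀ j, 0 < j → j < k → ∀ q ∈ S,
      (⨅ i ∈ Finset.range j, edist q (c i)) ≤ ⨅ i ∈ Finset.range j, edist (c j) (c i)) :
    ∀ p ∈ S, (⨅ i ∈ Finset.range k, edist p (c i)) ≤
      2 * ⨅ T ∈ S.powersetCard k, ⨆ q ∈ S, ⨅ t ∈ T, edist q t :=
  stmt_3_general S k c hmem hgreedy
end

section
/- Let O be an optimal solution of size k for the remote-edge problem on S (maximizing the minimum pairwise distance), with value ρ*_k. If T ⊆ S with |T| ≥ k and there exists a function p : O → T with d(o, p(o)) ≤ (ε'/2)·ρ*_k for all o ∈ O, where 1 − ε' = 1/(1+ε), then the remote-edge k-diversity of T is at least ρ*_k / (1+ε). -/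
/-!
Moving every point of `O` by at most `ε'ρ/2` changes each pairwise distance by at most `ε'ρ`.
Since distinct points of `O` are at least `ρ` apart and `ε' < 1`, the proxy map is injective on `O`,
so `p(O)` is a `k`-subset of `T` with diversity at least `(1 - ε')ρ = ρ/(1+ε)`.
-/

open ENNReal

variable {α : Type*} [MetricSpace α] [DecidableEq α]

/-- Remote-edge diversity: minimum pairwise distance of `X`. -/
noncomputable def remoteEdgeDiv (X : Finset α) : ℝ≥0∞ :=
  ⨅ x ∈ X, ⨅ y ∈ X.erase x, edist x y

/-- Remote-edge k-diversity: maximum of `remoteEdgeDiv` over k-subsets of `S`. -/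
noncomputable def remoteEdgeDivk (S : Finset α) (k : ℕ) : ℝ≥0∞ :=
  ⨆ X ∈ S.powersetCard k, remoteEdgeDiv X

lemma remoteEdgeDiv_le_edist {X : Finset α} {x y : α} (hx : x ∈ X) (hy : y ∈ X)
    (hxy : x ≠ y) : remoteEdgeDiv X ≤ edist x y :=
  (iInf₂_le x hx).trans (iInf₂_le y (Finset.mem_erase.2 ⟨hxy.symm, hy⟩))

lemma le_remoteEdgeDiv {X : Finset α} {c : ℝ≥0∞}
    (h : ∀ x ∈ X, ∀ y ∈ X, x ≠ y → c ≤ edist x y) : c ≤ remoteEdgeDiv X := by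
  refine le_iInf₂ fun x hx => le_iInf₂ fun y hy => ?_
  obtain ⟨hyx, hyX⟩ := Finset.mem_erase.1 hy
  exact h x hx y hyX hyx.symm

lemma remoteEdgeDiv_le_remoteEdgeDivk {X S : Finset α} (hXS : X ⊆ S) :
    remoteEdgeDiv X ≤ remoteEdgeDivk S X.card :=
  le_iSup₂ (f := fun X _ => remoteEdgeDiv X) X (Finset.mem_powersetCard.2 ⟨hXS, rfl⟩)

lemma remoteEdgeDiv_eq_top_iff {X : Finset α} : remoteEdgeDiv X = ⊤ ↔ X.card ≤ 1 := by
  constructor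
  · intro hX
    by_contra! hcard
    obtain ⟨x, hx, y, hy, hxy⟩ := Finset.one_lt_card.1 hcard
    exact edist_ne_top x y (top_le_iff.1 (hX ▸ remoteEdgeDiv_le_edist hx hy hxy))
  · intro hcard
    refine top_le_iff.1 (le_remoteEdgeDiv fun x hx y hy hxy => ?_)
    exact absurd (Finset.card_le_one.1 hcard x hx y hy) hxy

lemma Set.injOn_of_edist_le_of_add_le_mul_remoteEdgeDiv {X : Finset α} {f : α → α}
    {r c : ℝ≥0∞} (hc : c < 1) (hf : ∀ x ∈ X, edist x (f x) ≤ r)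
    (hr : r + r ≤ c * remoteEdgeDiv X) : Set.InjOn f X := by
  intro x hx y hy hfxy
  by_contra hxy
  have hclose : edist x y ≤ r + r :=
    calc edist x y ≤ edist x (f x) + edist (f y) y := by
          simpa [hfxy] using edist_triangle x (f x) y
      _ ≤ r + r := add_le_add (hf x hx) (edist_comm (f y) y ▸ hf y hy)
  have hfar : c * remoteEdgeDiv X < edist x y :=
    calc c * remoteEdgeDiv X ≤ c * edist x y := by gcongr; exact remoteEdgeDiv_le_edist hx hy hxy
      _ < 1 * edist x y := ENNReal.mul_lt_mul_left (edist_pos.2 hxy).ne' (edist_ne_top x y) hc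
      _ = edist x y := one_mul _
  exact (hclose.trans hr).not_gt hfar

lemma remoteEdgeDiv_image_le_remoteEdgeDivk {X T : Finset α} {f : α → α} (hf : Set.InjOn f X)
    (hfT : ∀ x ∈ X, f x ∈ T) : remoteEdgeDiv (X.image f) ≤ remoteEdgeDivk T X.card := by
  rw [← Finset.card_image_of_injOn hf]
  refine remoteEdgeDiv_le_remoteEdgeDivk fun _ h => ?_
  obtain ⟨x, hx, rfl⟩ := Finset.mem_image.1 h
  exact hfT x hx

lemma remoteEdgeDiv_sub_le_remoteEdgeDiv_image {X : Finset α} {f : α → α} {r : ℝ≥0∞}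
    (hf : ∀ x ∈ X, edist x (f x) ≤ r) : remoteEdgeDiv X - (r + r) ≤ remoteEdgeDiv (X.image f) := by
  refine le_remoteEdgeDiv fun a ha b hb hab => ?_
  obtain ⟨x, hx, rfl⟩ := Finset.mem_image.1 ha
  obtain ⟨y, hy, rfl⟩ := Finset.mem_image.1 hb
  have hxy : x ≠ y := fun h => hab (h ▸ rfl)
  rw [tsub_le_iff_right]
  calc remoteEdgeDiv X ≤ edist x y := remoteEdgeDiv_le_edist hx hy hxy
    _ ≤ edist x (f x) + edist (f x) (f y) + edist (f y) y := edist_triangle4 _ _ _ _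
    _ ≤ r + edist (f x) (f y) + r := by
        gcongr
        exacts [hf x hx, edist_comm (f y) y ▸ hf y hy]
    _ = edist (f x) (f y) + (r + r) := by ring

lemma nonneg_and_lt_one_of_one_sub_eq_one_div_one_add {ε ε' : ℝ} (hε : 0 ≤ ε)
    (hε' : 1 - ε' = 1 / (1 + ε)) : 0 ≤ ε' ∧ ε' < 1 := by
  have hpos : 0 < 1 / (1 + ε) := by positivity
  have hle : 1 / (1 + ε) ≤ 1 := by rw [div_le_one (by linarith)]; linarith
  constructor <;> linarith

lemma ENNReal.eq_one_add_ofReal_mul_sub {ε ε' : ℝ} (hε : 0 ≤ ε) (hε' : 1 - ε' = 1 / (1 + ε))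
    {a : ℝ≥0∞} (ha : a ≠ ⊤) : a = (1 + ENNReal.ofReal ε) * (a - ENNReal.ofReal ε' * a) := by
  have hε'0 := (nonneg_and_lt_one_of_one_sub_eq_one_div_one_add hε hε').1
  have hsub : a - ENNReal.ofReal ε' * a = ENNReal.ofReal (1 / (1 + ε)) * a := by
    rw [← hε', ENNReal.ofReal_sub _ hε'0, ENNReal.ofReal_one, ENNReal.sub_mul fun _ _ => ha,
      one_mul]
  rw [hsub, ← mul_assoc, ← ENNReal.ofReal_one, ← ENNReal.ofReal_add zero_le_one hε,
    ← ENNReal.ofReal_mul (by linarith), mul_one_div_cancel (by linarith), ENNReal.ofReal_one,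
    one_mul]

theorem stmt_4_general (S O T : Finset α) (k : ℕ) (ε ε' : ℝ)
    (hε : 0 < ε) (hε' : 1 - ε' = 1 / (1 + ε))
    (hOk : O.card = k)
    (hopt : remoteEdgeDiv O = remoteEdgeDivk S k)
    (p : α → α) (hpT : ∀ o ∈ O, p o ∈ T)
    (hclose : ∀ o ∈ O, edist o (p o) ≤ ENNReal.ofReal (ε' / 2) * remoteEdgeDivk S k) :
    remoteEdgeDivk S k ≤ (1 + ENNReal.ofReal ε) * remoteEdgeDivk T k := by
  set ρ := remoteEdgeDivk S k
  obtain ⟨hε'0, hε'1⟩ := nonneg_and_lt_one_of_one_sub_eq_one_div_one_add hε.le hε'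
  have h2r : ENNReal.ofReal (ε' / 2) * ρ + ENNReal.ofReal (ε' / 2) * ρ
        = ENNReal.ofReal ε' * ρ := by
    rw [← add_mul, ← ENNReal.ofReal_add (by positivity) (by positivity), add_halves]
  have hinj : Set.InjOn p O :=
    Set.injOn_of_edist_le_of_add_le_mul_remoteEdgeDiv (ENNReal.ofReal_lt_one.2 hε'1) hclose
      (by rw [h2r, hopt])
  have hpO := hOk ▸ remoteEdgeDiv_image_le_remoteEdgeDivk hinj hpT
  rcases eq_or_ne ρ ⊤ with hρ | hρ
  · have hO : remoteEdgeDiv (O.image p) = ⊤ := by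
      rw [remoteEdgeDiv_eq_top_iff, Finset.card_image_of_injOn hinj, ← remoteEdgeDiv_eq_top_iff,
        hopt, hρ]
    rw [hρ, top_le_iff.1 (hO.symm.le.trans hpO), ENNReal.mul_top (by simp)]
  calc ρ = (1 + ENNReal.ofReal ε) * (ρ - ENNReal.ofReal ε' * ρ) :=
        ENNReal.eq_one_add_ofReal_mul_sub hε.le hε' hρ
    _ ≤ (1 + ENNReal.ofReal ε) * remoteEdgeDivk T k := by
        gcongr
        have hsub := (remoteEdgeDiv_sub_le_remoteEdgeDiv_image hclose).trans hpO
        rwa [hopt, h2r] at hsub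

/-- If `O` is an optimal remote-edge solution of size `k` for `S` with value
`ρ*_k`, and `T ⊆ S` with `|T| ≥ k` admits a (not necessarily injective) proxy
function `p : O → T` with `d(o, p(o)) ≤ (ε'/2)·ρ*_k` where `1 - ε' = 1/(1+ε)`,
then the remote-edge k-diversity of `T` is at least `ρ*_k/(1+ε)`. -/
theorem stmt_4 (S O T : Finset α) (k : ℕ) (ε ε' : ℝ)
    (hε : 0 < ε) (hε1 : ε ≤ 1) (hε' : 1 - ε' = 1 / (1 + ε))
    (hOS : O ⊆ S) (hOk : O.card = k)
    (hopt : remoteEdgeDiv O = remoteEdgeDivk S k)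
    (hTS : T ⊆ S) (hTk : k ≤ T.card)
    (p : α → α) (hpT : ∀ o ∈ O, p o ∈ T)
    (hclose : ∀ o ∈ O, edist o (p o) ≤ ENNReal.ofReal (ε' / 2) * remoteEdgeDivk S k) :
    remoteEdgeDivk S k ≤ (1 + ENNReal.ofReal ε) * remoteEdgeDivk T k :=
  stmt_4_general S O T k ε ε' hε hε' hOk hopt p hpT hclose
end

section
/- Let O be a k-subset of S maximizing the remote-clique diversity div(X) = Σ_{x,y∈X, unordered pairs} d(x,y). Let ρ̄ = div(O)/C(k,2), and suppose T ⊆ S with |T| ≥ k admits an injective function p : O → T with d(o, p(o)) ≤ (ε'/2)·ρ̄ for all o ∈ O, where 1 − ε' = 1/(1+ε). Then div_k(T) ≥ div(O)/(1+ε). -/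
variable {α : Type*} [MetricSpace α] [DecidableEq α]

/-- Remote-clique diversity: sum of distances over unordered pairs of `X`. -/
noncomputable def cliqueDiv (X : Finset α) : ℝ :=
  (∑ e ∈ X.offDiag, dist e.1 e.2) / 2

/-!
Replacing each point of `O` by its proxy moves every pairwise distance by at most twice the
proxy radius `(ε'/2)·ρ̄` (triangle inequality). Summed over the `C(k,2)` pairs this costs at most
`ε'·div(O)`, so the injective image `p(O) ⊆ T`, a `k`-subset of `T`, has diversity at least
`(1 - ε')·div(O) = div(O)/(1+ε)`.
-/

namespace Finset

variable {ι κ : Type*} [DecidableEq ι]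

theorem card_offDiag_eq_two_mul_choose (s : Finset ι) :
    #s.offDiag = 2 * (#s).choose 2 := by
  rw [← Sym2.card_image_offDiag, Sym2.two_mul_card_image_offDiag]

theorem offDiag_image_of_injOn {s : Finset κ} {f : κ → ι}
    (hf : Set.InjOn f s) : (s.image f).offDiag = s.offDiag.image (Prod.map f f) := by
  ext ⟨x, y⟩
  simp only [mem_offDiag, mem_image, Prod.exists, Prod.map, Prod.mk.injEq]
  constructor
  · rintro ⟨⟨a, ha, rfl⟩, ⟨b, hb, rfl⟩, hab⟩
    exact ⟨a, b, ⟨ha, hb, fun h => hab (congrArg f h)⟩, rfl, rfl⟩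
  · rintro ⟨a, b, ⟨ha, hb, hab⟩, rfl, rfl⟩
    exact ⟨⟨a, ha, rfl⟩, ⟨b, hb, rfl⟩, fun h => hab (hf ha hb h)⟩

theorem sum_offDiag_image_of_injOn {M : Type*} [AddCommMonoid M] {s : Finset κ}
    {f : κ → ι} (hf : Set.InjOn f s) (g : ι → ι → M) :
    ∑ e ∈ (s.image f).offDiag, g e.1 e.2 = ∑ e ∈ s.offDiag, g (f e.1) (f e.2) := by
  rw [offDiag_image_of_injOn hf, sum_image]
  · rfl
  · rintro ⟨a, b⟩ hab ⟨c, d⟩ hcd h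
    rw [coe_offDiag, Set.mem_offDiag] at hab hcd
    simp only [Prod.map, Prod.mk.injEq] at h
    exact Prod.ext (hf hab.1 hcd.1 h.1) (hf hab.2.1 hcd.2.1 h.2)

end Finset

open Finset

theorem cliqueDiv_sub_le_cliqueDiv_image {O : Finset α} {p : α → α} (hinj : Set.InjOn p O)
    {δ : ℝ} (hclose : ∀ o ∈ O, dist o (p o) ≤ δ) :
    cliqueDiv O - 2 * (#O).choose 2 * δ ≤ cliqueDiv (O.image p) := by
  have hpair : ∀ e ∈ O.offDiag, dist e.1 e.2 - 2 * δ ≤ dist (p e.1) (p e.2) := by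
    rintro ⟨a, b⟩ hab
    rw [mem_offDiag] at hab
    have hb := hclose b hab.2.1
    rw [dist_comm] at hb
    linarith [dist_triangle4 a (p a) (p b) b, hclose a hab.1]
  have hsum := sum_le_sum hpair
  rw [sum_sub_distrib, sum_const, nsmul_eq_mul, card_offDiag_eq_two_mul_choose] at hsum
  unfold cliqueDiv
  rw [sum_offDiag_image_of_injOn hinj (fun x y => dist x y)]
  push_cast at hsum
  linarith

theorem stmt_5_general (O T : Finset α) (k : ℕ) (hk : 2 ≤ k) (ε ε' : ℝ)
    (hε : 0 < ε) (hε' : 1 - ε' = 1 / (1 + ε))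
    (hOk : O.card = k)
    (p : α → α) (hpT : ∀ o ∈ O, p o ∈ T) (hinj : Set.InjOn p ↑O)
    (hclose : ∀ o ∈ O, dist o (p o) ≤ (ε' / 2) * (cliqueDiv O / (k.choose 2))) :
    ∃ T' ⊆ T, T'.card = k ∧ cliqueDiv O ≤ (1 + ε) * cliqueDiv T' := by
  refine ⟨O.image p, image_subset_iff.mpr hpT, (card_image_of_injOn hinj).trans hOk, ?_⟩
  have hchoose : (k.choose 2 : ℝ) ≠ 0 := by exact_mod_cast (Nat.choose_pos hk).ne'
  have hshrink : (1 - ε') * cliqueDiv O ≤ cliqueDiv (O.image p) := by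
    have h := cliqueDiv_sub_le_cliqueDiv_image hinj hclose
    rw [hOk, show 2 * (k.choose 2 : ℝ) * (ε' / 2 * (cliqueDiv O / k.choose 2))
      = ε' * cliqueDiv O by field_simp] at h
    linarith
  calc cliqueDiv O = (1 + ε) * ((1 - ε') * cliqueDiv O) := by
        rw [hε']; field_simp
    _ ≤ (1 + ε) * cliqueDiv (O.image p) := by gcongr

/-- If `O` is a k-subset of `S` maximizing the remote-clique diversity,
`ρ̄ = div(O)/C(k,2)`, and `T ⊆ S` with `|T| ≥ k` admits an injective proxy
`p : O → T` with `d(o,p(o)) ≤ (ε'/2)·ρ̄` where `1 - ε' = 1/(1+ε)`, then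
`div_k(T) ≥ div(O)/(1+ε)`. -/
theorem stmt_5 (S O T : Finset α) (k : ℕ) (hk : 2 ≤ k) (ε ε' : ℝ)
    (hε : 0 < ε) (hε1 : ε ≤ 1) (hε' : 1 - ε' = 1 / (1 + ε))
    (hOS : O ⊆ S) (hOk : O.card = k)
    (hopt : ∀ X ⊆ S, X.card = k → cliqueDiv X ≤ cliqueDiv O)
    (hTS : T ⊆ S) (hTk : k ≤ T.card)
    (p : α → α) (hpT : ∀ o ∈ O, p o ∈ T) (hinj : Set.InjOn p ↑O)
    (hclose : ∀ o ∈ O, dist o (p o) ≤ (ε' / 2) * (cliqueDiv O / (k.choose 2))) :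
    ∃ T' ⊆ T, T'.card = k ∧ cliqueDiv O ≤ (1 + ε) * cliqueDiv T' :=
  stmt_5_general O T k hk ε ε' hε hε' hOk p hpT hinj hclose
end

section
/- Let O be a k-subset of S maximizing the remote-cycle diversity div(X) = w(TSP(X)) (minimum weight Hamiltonian cycle on X). Suppose T ⊆ S with |T| ≥ k admits a function p : O → T with d(o, p(o)) ≤ (ε'/2)·div(O)/k for all o ∈ O, where 1 − ε' = 1/(1+ε). Then div_k(T) ≥ div(O)/(1+ε). -/
/-!
By the triangle inequality, shortcutting a vertex never lengthens a tour, so `w(TSP(·))` is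
monotone under inclusion; and a point `o` can be spliced into a tour right after a vertex `x` at
extra cost at most `2 d(o, x)`. Splicing every `o ∈ O` after `p o` into an optimal tour of a
`k`-set `T' ⊇ p(O)` and shortcutting `T' \ O` gives
`w(TSP(O)) ≤ w(TSP(T')) + 2 ∑ d(o, p o) ≤ w(TSP(T')) + ε' w(TSP(O))`, and `(1 + ε)(1 - ε') = 1`.
-/

variable {α : Type*} [MetricSpace α]

/-- Minimum weight of a Hamiltonian cycle (TSP tour) through the points of `X`. -/
noncomputable def tspWeight (X : Finset α) : ℝ :=
  sInf { w | ∃ e : Fin X.card ≃ {x // x ∈ X},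
    w = ∑ i, dist (e i : α) (e (finRotate X.card i) : α) }

noncomputable def pathWeight : List α → ℝ
  | a :: b :: l => dist a b + pathWeight (b :: l)
  | _ => 0

@[simp] lemma pathWeight_singleton (a : α) : pathWeight [a] = 0 := rfl
@[simp] lemma pathWeight_cons_cons (a b : α) (l : List α) :
    pathWeight (a :: b :: l) = dist a b + pathWeight (b :: l) := rfl

lemma pathWeight_cons_append_cons (a b : α) (xs ys : List α) :
    pathWeight (a :: (xs ++ b :: ys)) = pathWeight (a :: xs ++ [b]) + pathWeight (b :: ys) := by
  induction xs generalizing a with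
  | nil => simp
  | cons c xs ih => simp [ih, add_assoc]

lemma pathWeight_cons_le (a b : α) (l : List α) :
    pathWeight (a :: l) ≤ dist a b + pathWeight (b :: l) := by
  cases l with
  | nil => simp
  | cons c l =>
    simp only [pathWeight_cons_cons]
    linarith [dist_triangle a b c]

lemma pathWeight_append_singleton_le (a b : α) (l : List α) :
    pathWeight (l ++ [a]) ≤ pathWeight (l ++ [b]) + dist b a := by
  induction l with
  | nil => simp
  | cons c l ih =>
    cases l with
    | nil => simpa using dist_triangle c b a
    | cons d l => simp only [List.cons_append, pathWeight_cons_cons] at ih ⊢; linarith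

lemma pathWeight_ofFn {n : ℕ} (f : Fin (n + 1) → α) :
    pathWeight (List.ofFn f) = ∑ i : Fin n, dist (f i.castSucc) (f i.succ) := by
  induction n with
  | zero => simp
  | succ n ih =>
    have hcons : pathWeight (List.ofFn f)
        = dist (f 0) (f 1) + pathWeight (List.ofFn fun i => f i.succ) := by
      rw [List.ofFn_succ, List.ofFn_succ (f := fun i => f i.succ)]
      rfl
    rw [hcons, ih, Fin.sum_univ_succ]
    rfl

/-- A list `l ~ X.toList` encodes a tour of `X`; `l.take 1` closes it up. -/
noncomputable def tourWeight (l : List α) : ℝ :=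
  pathWeight (l ++ l.take 1)

@[simp] lemma tourWeight_nil : tourWeight ([] : List α) = 0 := rfl

lemma tourWeight_cons (a : α) (l : List α) :
    tourWeight (a :: l) = pathWeight (a :: l ++ [a]) := rfl

lemma tourWeight_append_comm (xs ys : List α) : tourWeight (xs ++ ys) = tourWeight (ys ++ xs) := by
  cases xs with
  | nil => simp
  | cons x xs =>
    cases ys with
    | nil => simp
    | cons y ys =>
      simp only [List.cons_append, tourWeight_cons, List.append_assoc]
      rw [pathWeight_cons_append_cons x y xs (ys ++ [x]),
        pathWeight_cons_append_cons y x ys (xs ++ [y])]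
      simp only [List.cons_append]
      ring

lemma exists_perm_cons_tourWeight_eq {x : α} {l : List α} (hx : x ∈ l) :
    ∃ t, (x :: t).Perm l ∧ tourWeight (x :: t) = tourWeight l := by
  obtain ⟨s, t, rfl⟩ := List.append_of_mem hx
  exact ⟨t ++ s, (List.perm_append_comm : ((x :: t) ++ s).Perm _), tourWeight_append_comm (x :: t) s⟩

lemma tourWeight_cons_cons_le (x o : α) (t : List α) :
    tourWeight (x :: o :: t) ≤ tourWeight (x :: t) + 2 * dist o x := by
  have hdetour := pathWeight_cons_le o x (t ++ [x])
  simp only [tourWeight_cons, List.cons_append, pathWeight_cons_cons] at hdetour ⊢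
  linarith [dist_comm x o]

lemma tourWeight_le_cons (x : α) (t : List α) : tourWeight t ≤ tourWeight (x :: t) := by
  cases t with
  | nil => simp [tourWeight_cons]
  | cons y t =>
    have hshortcut := pathWeight_append_singleton_le y x (y :: t)
    simp only [tourWeight_cons, List.cons_append, pathWeight_cons_cons] at hshortcut ⊢
    linarith [dist_comm x y]

lemma sum_dist_finRotate_eq_tourWeight {n : ℕ} (f : Fin n → α) :
    ∑ i, dist (f i) (f (finRotate n i)) = tourWeight (List.ofFn f) := by
  cases n with
  | zero => simp
  | succ m =>
    have hclose : List.ofFn f ++ (List.ofFn f).take 1 = List.ofFn (Fin.snoc f (f 0)) := by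
      rw [List.ofFn_succ' (Fin.snoc f (f 0))]
      simp [List.ofFn_succ]
    rw [tourWeight, hclose, pathWeight_ofFn, Fin.sum_univ_castSucc, Fin.sum_univ_castSucc]
    simp only [finRotate_apply, Fin.coeSucc_eq_succ, Fin.last_add_one, Fin.succ_last,
      Fin.succ_castSucc, Fin.snoc_castSucc, Fin.snoc_last]

lemma tspWeight_le_tourWeight {X : Finset α} {l : List α} (hl : l.Perm X.toList) :
    tspWeight X ≤ tourWeight l := by
  classical
  have hnd : l.Nodup := hl.nodup_iff.2 X.nodup_toList
  have hcard : X.card = l.length := by rw [hl.length_eq, Finset.length_toList]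
  let e : Fin X.card ≃ {x // x ∈ X} := (finCongr hcard).trans <| (hnd.getEquiv l).trans <|
    Equiv.subtypeEquivRight fun x => by rw [hl.mem_iff, Finset.mem_toList]
  refine csInf_le ⟨0, ?_⟩ ⟨e, ?_⟩
  · rintro w ⟨e, rfl⟩
    exact Finset.sum_nonneg fun i _ => dist_nonneg
  · rw [sum_dist_finRotate_eq_tourWeight (fun i => (e i : α))]
    conv_lhs => rw [← List.ofFn_get l, List.ofFn_congr hcard.symm]
    rfl

lemma le_tspWeight {X : Finset α} {c : ℝ} (h : ∀ l : List α, l.Perm X.toList → c ≤ tourWeight l) :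
    c ≤ tspWeight X := by
  refine le_csInf ⟨_, X.equivFin.symm, rfl⟩ ?_
  rintro w ⟨e, rfl⟩
  rw [sum_dist_finRotate_eq_tourWeight]
  refine h _ ((List.perm_ext_iff_of_nodup ?_ X.nodup_toList).2 fun x => ?_)
  · exact List.nodup_ofFn.2 fun i j hij => e.injective (Subtype.ext hij)
  · rw [List.mem_ofFn, Finset.mem_toList]
    exact ⟨by rintro ⟨i, rfl⟩; exact (e i).2, fun hx => ⟨e.symm ⟨x, hx⟩, by simp⟩⟩

lemma tspWeight_insert_le [DecidableEq α] {X : Finset α} {x : α} (hx : x ∈ X) (o : α) :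
    tspWeight (insert o X) ≤ tspWeight X + 2 * dist o x := by
  by_cases ho : o ∈ X
  · rw [Finset.insert_eq_of_mem ho]
    linarith [dist_nonneg (x := o) (y := x)]
  rw [← sub_le_iff_le_add]
  refine le_tspWeight fun l hl => ?_
  obtain ⟨t, hxt, hw⟩ := exists_perm_cons_tourWeight_eq (hl.mem_iff.2 (Finset.mem_toList.2 hx))
  have hnew : (x :: o :: t).Perm (insert o X).toList :=
    ((List.Perm.swap o x t).trans ((hxt.trans hl).cons o)).trans (Finset.toList_insert ho).symm
  linarith [tspWeight_le_tourWeight hnew, tourWeight_cons_cons_le x o t]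

lemma tspWeight_le_insert [DecidableEq α] (a : α) (X : Finset α) :
    tspWeight X ≤ tspWeight (insert a X) := by
  by_cases ha : a ∈ X
  · rw [Finset.insert_eq_of_mem ha]
  refine le_tspWeight fun l hl => ?_
  obtain ⟨t, hat, hw⟩ :=
    exists_perm_cons_tourWeight_eq (hl.mem_iff.2 (Finset.mem_toList.2 (Finset.mem_insert_self a X)))
  have hrest : t.Perm X.toList := ((hat.trans hl).trans (Finset.toList_insert ha)).cons_inv
  rw [← hw]
  exact (tspWeight_le_tourWeight hrest).trans (tourWeight_le_cons a t)

lemma tspWeight_mono : Monotone (tspWeight : Finset α → ℝ) := by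
  classical
  intro X Y hXY
  rw [← Finset.union_sdiff_of_subset hXY]
  induction Y \ X using Finset.induction_on with
  | empty => simp
  | insert a D _ ih =>
    rw [Finset.union_insert]
    exact ih.trans (tspWeight_le_insert a _)

lemma tspWeight_union_le [DecidableEq α] {X O : Finset α} {p : α → α} (hp : ∀ o ∈ O, p o ∈ X) :
    tspWeight (X ∪ O) ≤ tspWeight X + 2 * ∑ o ∈ O, dist o (p o) := by
  induction O using Finset.induction_on with
  | empty => simp
  | insert o O ho ih =>
    rw [Finset.union_insert, Finset.sum_insert ho]
    have hstep := tspWeight_insert_le (Finset.mem_union_left O (hp o (O.mem_insert_self o))) o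
    have hrest := ih fun o' ho' => hp o' (Finset.mem_insert_of_mem ho')
    linarith

lemma tspWeight_le_add_of_mapsTo {O T : Finset α} {p : α → α} (hp : ∀ o ∈ O, p o ∈ T) :
    tspWeight O ≤ tspWeight T + 2 * ∑ o ∈ O, dist o (p o) := by
  classical
  exact (tspWeight_mono Finset.subset_union_right).trans (tspWeight_union_le hp)

theorem stmt_7_general (O T : Finset α) (k : ℕ) (hk : 0 < k) (ε ε' : ℝ)
    (hε : 0 < ε) (hε' : 1 - ε' = 1 / (1 + ε)) (hOk : O.card = k) (hTk : k ≤ T.card)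
    (p : α → α) (hpT : ∀ o ∈ O, p o ∈ T)
    (hclose : ∀ o ∈ O, dist o (p o) ≤ (ε' / 2) * (tspWeight O / k)) :
    ∃ T' ⊆ T, T'.card = k ∧ tspWeight O ≤ (1 + ε) * tspWeight T' := by
  classical
  obtain ⟨T', hpT', hT'T, hT'k⟩ := Finset.exists_subsuperset_card_eq
    (Finset.image_subset_iff.2 hpT) (Finset.card_image_le.trans hOk.le) hTk
  refine ⟨T', hT'T, hT'k, ?_⟩
  have hshift := tspWeight_le_add_of_mapsTo fun o ho => hpT' (Finset.mem_image_of_mem p ho)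
  have hmove : 2 * ∑ o ∈ O, dist o (p o) ≤ ε' * tspWeight O := by
    have hsum := Finset.sum_le_card_nsmul O _ _ hclose
    have hk' : (k : ℝ) ≠ 0 := by positivity
    rw [hOk, nsmul_eq_mul, mul_left_comm, mul_div_cancel₀ _ hk'] at hsum
    linarith
  have hratio : (1 + ε) * (1 - ε') = 1 := by
    rw [hε']
    field_simp
  calc tspWeight O = (1 + ε) * ((1 - ε') * tspWeight O) := by rw [← mul_assoc, hratio, one_mul]
    _ ≤ (1 + ε) * tspWeight T' := by gcongr; linarith

/-- If `O` is a k-subset of `S` maximizing the remote-cycle diversity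
`div(X) = w(TSP(X))`, and `T ⊆ S` with `|T| ≥ k` admits a proxy `p : O → T`
with `d(o,p(o)) ≤ (ε'/2)·div(O)/k` where `1 - ε' = 1/(1+ε)`, then
`div_k(T) ≥ div(O)/(1+ε)`. -/
theorem stmt_7 (S O T : Finset α) (k : ℕ) (hk : 0 < k) (ε ε' : ℝ)
    (hε : 0 < ε) (hε1 : ε ≤ 1) (hε' : 1 - ε' = 1 / (1 + ε))
    (hOS : O ⊆ S) (hOk : O.card = k)
    (hopt : ∀ X ⊆ S, X.card = k → tspWeight X ≤ tspWeight O)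
    (hTS : T ⊆ S) (hTk : k ≤ T.card)
    (p : α → α) (hpT : ∀ o ∈ O, p o ∈ T)
    (hclose : ∀ o ∈ O, dist o (p o) ≤ (ε' / 2) * (tspWeight O / k)) :
    ∃ T' ⊆ T, T'.card = k ∧ tspWeight O ≤ (1 + ε) * tspWeight T' :=
  stmt_7_general O T k hk ε ε' hε hε' hOk hTk p hpT hclose
end

section
/- Let O be a k-subset of S maximizing the remote-tree diversity div(X) = w(MST(X)). Suppose T ⊆ S with |T| ≥ k admits an injective function p : O → T with d(o, p(o)) ≤ (ε'/2)·ρ*_k for all o ∈ O, where 1 − ε' = 1/(1+ε) and ρ*_k is the optimal farness of S w.r.t. k. Then div_k(T) ≥ div(O)/(1+ε). -/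
variable {α : Type*} [MetricSpace α]

/-- Minimum weight of a spanning tree of the complete metric graph on `X`,
expressed via enumerations with a parent function. -/
noncomputable def mstWeight (X : Finset α) : ℝ :=
  sInf { w | ∃ e : Fin X.card ≃ {x // x ∈ X}, ∃ π : Fin X.card → Fin X.card,
    (∀ i : Fin X.card, 0 < (i : ℕ) → π i < i) ∧
    w = ∑ i ∈ Finset.univ.filter (fun i : Fin X.card => 0 < (i : ℕ)),
      dist (e i : α) (e (π i) : α) }

/-- `ρ` is the optimal farness of `S` w.r.t. `k`: some k-subset has all pairwise
distances at least `ρ`, and every k-subset has a pair at distance at most `ρ`. -/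
def IsOptFarness (S : Finset α) (k : ℕ) (ρ : ℝ) : Prop :=
  (∃ U ⊆ S, U.card = k ∧ ∀ x ∈ U, ∀ y ∈ U, x ≠ y → ρ ≤ dist x y) ∧
  (∀ U ⊆ S, U.card = k → ∃ x ∈ U, ∃ y ∈ U, x ≠ y ∧ dist x y ≤ ρ)

/-!
Pulling a spanning tree of `p(O)` back along `p` moves both endpoints of each of its `k - 1`
edges by at most `(ε'/2)·ρ`, so `w(MST O) ≤ w(MST p(O)) + (k - 1)·ε'·ρ`. The far `k`-set
witnessing the optimal farness has every spanning tree of weight at least `(k - 1)·ρ`, hence so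
does the optimal `O`, and together `(1 - ε')·w(MST O) ≤ w(MST p(O))`.
-/

open Finset

theorem Fin.card_filter_pos (n : ℕ) : #{i : Fin n | 0 < (i : ℕ)} = n - 1 := by
  cases n with
  | zero => simp
  | succ m =>
    have hpos : ({i : Fin (m + 1) | 0 < (i : ℕ)} : Finset _) = univ.erase 0 := by
      ext i
      simp [Fin.pos_iff_ne_zero']
    rw [hpos, card_erase_of_mem (mem_univ _)]
    simp

theorem mstWeight_le_sum {X : Finset α} {n : ℕ} (e : Fin n ≃ {x // x ∈ X})
    (π : Fin n → Fin n) (hπ : ∀ i : Fin n, 0 < (i : ℕ) → π i < i) :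
    mstWeight X ≤ ∑ i : Fin n with 0 < i.val, dist (e i : α) (e (π i)) := by
  obtain rfl : n = X.card := by simpa using Fintype.card_congr e
  refine csInf_le ⟨0, ?_⟩ ⟨e, π, hπ, rfl⟩
  rintro _ ⟨_, _, _, rfl⟩
  exact sum_nonneg fun _ _ => dist_nonneg

theorem le_mstWeight {X : Finset α} {a : ℝ}
    (h : ∀ (e : Fin X.card ≃ {x // x ∈ X}) (π : Fin X.card → Fin X.card),
      (∀ i : Fin X.card, 0 < (i : ℕ) → π i < i) →
        a ≤ ∑ i : Fin X.card with 0 < i.val, dist (e i : α) (e (π i))) :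
    a ≤ mstWeight X := by
  -- the star rooted at the first vertex shows that the set of tree weights is nonempty
  refine le_csInf ⟨_, X.equivFin.symm, fun i => ⟨0, i.pos⟩, fun i hi => hi, rfl⟩ ?_
  rintro _ ⟨e, π, hπ, rfl⟩
  exact h e π hπ

theorem mul_le_mstWeight_of_le_dist {U : Finset α} {ρ : ℝ}
    (hU : ∀ x ∈ U, ∀ y ∈ U, x ≠ y → ρ ≤ dist x y) :
    ((#U - 1 : ℕ) : ℝ) * ρ ≤ mstWeight U := by
  refine le_mstWeight fun e π hπ => ?_
  have hedge : ∀ i ∈ ({i | 0 < i.val} : Finset (Fin #U)), ρ ≤ dist (e i : α) (e (π i)) := by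
    intro i hi
    have hlt : π i < i := hπ i (mem_filter.1 hi).2
    refine hU _ (e i).2 _ (e (π i)).2 fun heq => hlt.ne ?_
    exact e.injective (Subtype.ext heq.symm)
  simpa [Fin.card_filter_pos] using card_nsmul_le_sum _ _ _ hedge

theorem mstWeight_le_of_equiv {X Y : Finset α} (g : {x // x ∈ X} ≃ {y // y ∈ Y}) (δ : ℝ)
    (hg : ∀ a b : {x // x ∈ X}, dist (a : α) b ≤ dist (g a : α) (g b) + δ) :
    mstWeight X ≤ mstWeight Y + ((#X - 1 : ℕ) : ℝ) * δ := by
  have hcard : #Y = #X := by simpa using Fintype.card_congr g.symm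
  rw [← sub_le_iff_le_add]
  refine le_mstWeight fun e π hπ => ?_
  calc mstWeight X - ((#X - 1 : ℕ) : ℝ) * δ
      ≤ ∑ i : Fin #Y with 0 < i.val, dist ((e.trans g.symm) i : α) ((e.trans g.symm) (π i))
          - ((#X - 1 : ℕ) : ℝ) * δ := by
        gcongr
        exact mstWeight_le_sum _ π hπ
    _ ≤ ∑ i : Fin #Y with 0 < i.val, (dist (e i : α) (e (π i)) + δ) - ((#X - 1 : ℕ) : ℝ) * δ := by
        gcongr with i
        simpa using hg (g.symm (e i)) (g.symm (e (π i)))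
    _ = ∑ i : Fin #Y with 0 < i.val, dist (e i : α) (e (π i)) := by
        rw [sum_add_distrib, sum_const, Fin.card_filter_pos, nsmul_eq_mul, ← hcard]
        ring

theorem mstWeight_le_mstWeight_image_add [DecidableEq α] {O : Finset α} {p : α → α} {c : ℝ}
    (hinj : Set.InjOn p O) (hclose : ∀ o ∈ O, dist o (p o) ≤ c) :
    mstWeight O ≤ mstWeight (O.image p) + ((#O - 1 : ℕ) : ℝ) * (2 * c) := by
  have hbij : Set.BijOn p O (O.image p) := by
    rw [coe_image]
    exact hinj.bijOn_image
  refine mstWeight_le_of_equiv (hbij.equiv p) _ fun a b => ?_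
  calc dist (a : α) b ≤ dist (a : α) (p a) + dist (p a) (p b) + dist (p b) b :=
        dist_triangle4 _ _ _ _
    _ ≤ c + dist (p a) (p b) + c := by
        gcongr
        · exact hclose a a.2
        · exact dist_comm (p b) b ▸ hclose b b.2
    _ = dist (p a) (p b) + 2 * c := by ring

theorem stmt_8_general (S O T : Finset α) (k : ℕ) (ε ε' ρ : ℝ)
    (hε : 0 < ε) (hε' : 1 - ε' = 1 / (1 + ε))
    (hρ : IsOptFarness S k ρ)
    (hOk : O.card = k)
    (hopt : ∀ X ⊆ S, X.card = k → mstWeight X ≤ mstWeight O)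
    (p : α → α) (hpT : ∀ o ∈ O, p o ∈ T) (hinj : Set.InjOn p ↑O)
    (hclose : ∀ o ∈ O, dist o (p o) ≤ (ε' / 2) * ρ) :
    ∃ T' ⊆ T, T'.card = k ∧ mstWeight O ≤ (1 + ε) * mstWeight T' := by
  classical
  obtain ⟨U, hUS, hUk, hUfar⟩ := hρ.1
  have hfar : ((k - 1 : ℕ) : ℝ) * ρ ≤ mstWeight O :=
    hUk ▸ (mul_le_mstWeight_of_le_dist hUfar).trans (hopt U hUS hUk)
  have htransfer := mstWeight_le_mstWeight_image_add hinj hclose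
  have hε'0 : 0 ≤ ε' := by
    have : 1 / (1 + ε) ≤ 1 := by rw [div_le_one (by linarith)]; linarith
    linarith
  have hshrink : (1 - ε') * mstWeight O ≤ mstWeight (O.image p) := by
    rw [hOk] at htransfer
    linarith [mul_le_mul_of_nonneg_left hfar hε'0]
  refine ⟨O.image p, image_subset_iff.2 hpT, by rw [card_image_of_injOn hinj, hOk], ?_⟩
  calc mstWeight O = (1 + ε) * ((1 - ε') * mstWeight O) := by
        rw [hε']
        field_simp
    _ ≤ (1 + ε) * mstWeight (O.image p) := by gcongr

/-- If `O` is a k-subset of `S` maximizing the remote-tree diversity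
`div(X) = w(MST(X))`, and `T ⊆ S` with `|T| ≥ k` admits an injective proxy
`p : O → T` with `d(o,p(o)) ≤ (ε'/2)·ρ*_k` where `1 - ε' = 1/(1+ε)`, then
`div_k(T) ≥ div(O)/(1+ε)`. -/
theorem stmt_8 (S O T : Finset α) (k : ℕ) (hk : 2 ≤ k) (ε ε' ρ : ℝ)
    (hε : 0 < ε) (hε1 : ε ≤ 1) (hε' : 1 - ε' = 1 / (1 + ε))
    (hρ : IsOptFarness S k ρ)
    (hOS : O ⊆ S) (hOk : O.card = k)
    (hopt : ∀ X ⊆ S, X.card = k → mstWeight X ≤ mstWeight O)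
    (hTS : T ⊆ S) (hTk : k ≤ T.card)
    (p : α → α) (hpT : ∀ o ∈ O, p o ∈ T) (hinj : Set.InjOn p ↑O)
    (hclose : ∀ o ∈ O, dist o (p o) ≤ (ε' / 2) * ρ) :
    ∃ T' ⊆ T, T'.card = k ∧ mstWeight O ≤ (1 + ε) * mstWeight T' :=
  stmt_8_general S O T k ε ε' ρ hε hε' hρ hOk hopt p hpT hinj hclose
end

section
/- Let T = ⋃_{i=1}^ℓ GMM(S_i, k') where S_1,…,S_ℓ partition S, the metric space has doubling dimension D, and k' = (8/ε')^D · k for 0 < ε' ≤ 1. Then for any k-subset X ⊆ S there exists a function p : X → T with d(x, p(x)) ≤ (ε'/2)·ρ*_k for all x ∈ X, where ρ*_k is the optimal farness of S w.r.t. k. -/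
/-!
Fix a part `Sᵢ` and write `c₀, c₁, …` for its greedy centres. Any `k` points of the form
`c₀, …, c_{k-2}, q` with `q ∈ Sᵢ` far from all of `c₀, …, c_{k-2}` would be pairwise `ρ`-far
by the greedy rule, which contradicts the optimality of `ρ`; so `k - 1` balls of radius `ρ`
cover `Sᵢ`. Halving these balls `m` times with `4/ε' ≤ 2^m ≤ 8/ε'` covers `Sᵢ` by at most
`k'` balls of radius `r = ρ/2^m`, and Gonzalez's argument shows that `k'` greedy centres then
lie within `2r ≤ (ε'/2)ρ` of every point of `Sᵢ`: otherwise the `k'` centres together with a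
far point would be `k' + 1` pairwise `2r`-far points in `k'` balls of radius `r`.
-/

open Metric

variable {α : Type*} [MetricSpace α]

namespace IsOptFarness

variable {S : Finset α} {k : ℕ} {ρ : ℝ}

lemma nonneg (hρ : IsOptFarness S k ρ) : 0 ≤ ρ := by
  obtain ⟨U, hUS, hUk, -⟩ := hρ.1
  obtain ⟨x, -, y, -, -, hxy⟩ := hρ.2 U hUS hUk
  exact dist_nonneg.trans hxy

lemma exists_dist_le (hρ : IsOptFarness S k ρ) {f : ℕ → α} (hf : ∀ t < k, f t ∈ S) :
    ∃ t < k, ∃ s < k, t ≠ s ∧ dist (f t) (f s) ≤ ρ := by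
  classical
  by_cases hinj : Set.InjOn f (Finset.range k : Set ℕ)
  · have hcard : ((Finset.range k).image f).card = k := by
      rw [Finset.card_image_of_injOn hinj, Finset.card_range]
    have hsub : (Finset.range k).image f ⊆ S := by
      simpa [Finset.image_subset_iff] using hf
    obtain ⟨x, hx, y, hy, hxy, hdist⟩ := hρ.2 _ hsub hcard
    obtain ⟨t, ht, rfl⟩ := Finset.mem_image.1 hx
    obtain ⟨s, hs, rfl⟩ := Finset.mem_image.1 hy
    exact ⟨t, Finset.mem_range.1 ht, s, Finset.mem_range.1 hs, ne_of_apply_ne f hxy, hdist⟩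
  · obtain ⟨t, ht, s, hs, hfts, hts⟩ : ∃ t ∈ Finset.range k, ∃ s ∈ Finset.range k,
        f t = f s ∧ t ≠ s := by
      simpa [Set.InjOn] using hinj
    refine ⟨t, Finset.mem_range.1 ht, s, Finset.mem_range.1 hs, hts, ?_⟩
    rw [hfts, dist_self]
    exact hρ.nonneg

end IsOptFarness

/-- `c 0, …, c (n - 1)` is the output of GMM (farthest-first traversal) on `A`, with the greedy
rule `d(q, {c 0, …, c (j - 1)}) ≤ d(c j, {c 0, …, c (j - 1)})` for `q ∈ A` stated without minima. -/
def IsFarthestFirstTraversal (A : Set α) (c : ℕ → α) (n : ℕ) : Prop :=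
  (∀ j < n, c j ∈ A) ∧ ∀ j < n, ∀ s < j, ∀ q ∈ A, ∃ u < j, dist q (c u) ≤ dist (c j) (c s)

lemma isFarthestFirstTraversal_of_inf'_le {A : Finset α} {c : ℕ → α} {n : ℕ}
    (hmem : ∀ j < n, c j ∈ A)
    (hgreedy : ∀ j, ∀ hj : 0 < j, j < n → ∀ q ∈ A,
      ((Finset.range j).inf' (Finset.nonempty_range_iff.mpr hj.ne') fun t => dist q (c t)) ≤
      ((Finset.range j).inf' (Finset.nonempty_range_iff.mpr hj.ne') fun t => dist (c j) (c t))) :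
    IsFarthestFirstTraversal (A : Set α) c n := by
  refine ⟨hmem, fun j hjn s hsj q hq => ?_⟩
  have hj : 0 < j := hsj.pos
  obtain ⟨u, hu, hqu⟩ := Finset.exists_mem_eq_inf'
    (Finset.nonempty_range_iff.mpr hj.ne') fun t => dist q (c t)
  refine ⟨u, Finset.mem_range.1 hu, ?_⟩
  rw [← hqu]
  exact (hgreedy j hj hjn q hq).trans (Finset.inf'_le _ (Finset.mem_range.2 hsj))

namespace IsFarthestFirstTraversal

variable {A : Set α} {c : ℕ → α} {n j : ℕ} {q : α}

lemma update_mem (h : IsFarthestFirstTraversal A c n) (hj : j ≤ n) (hq : q ∈ A) :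
    ∀ t < j + 1, Function.update c j q t ∈ A := by
  intro t ht
  rcases eq_or_ne t j with rfl | htj
  · simpa using hq
  · rw [Function.update_of_ne htj]
    exact h.1 t (by omega)

lemma dist_update_gt (h : IsFarthestFirstTraversal A c n) (hj : j ≤ n) (hq : q ∈ A) {δ : ℝ}
    (hfar : ∀ u < j, δ < dist q (c u)) :
    ∀ t < j + 1, ∀ s < j + 1, t ≠ s →
      δ < dist (Function.update c j q t) (Function.update c j q s) := by
  have hlt : ∀ t < j + 1, ∀ s < t,
      δ < dist (Function.update c j q t) (Function.update c j q s) := by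
    intro t ht s hst
    rw [Function.update_of_ne (by omega : s ≠ j)]
    rcases eq_or_ne t j with rfl | htj
    · simpa using hfar s hst
    · rw [Function.update_of_ne htj]
      obtain ⟨u, hut, hqu⟩ := h.2 t (by omega) s hst q hq
      exact (hfar u (by omega)).trans_le hqu
  intro t ht s hs hts
  rcases lt_or_gt_of_ne hts with hts | hst
  · rw [dist_comm]
    exact hlt s hs t hts
  · exact hlt t ht s hst

lemma exists_dist_le_of_isOptFarness (h : IsFarthestFirstTraversal A c n) {S : Finset α}
    (hAS : A ⊆ S) {ρ : ℝ} (hρ : IsOptFarness S (j + 1) ρ) (hj : j ≤ n) :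
    ∀ q ∈ A, ∃ u < j, dist q (c u) ≤ ρ := by
  by_contra! ⟨q, hq, hfar⟩
  obtain ⟨t, ht, s, hs, hts, hdist⟩ :=
    hρ.exists_dist_le fun t ht => hAS (h.update_mem hj hq t ht)
  exact (h.dist_update_gt hj hq hfar t ht s hs hts).not_ge hdist

end IsFarthestFirstTraversal

lemma card_le_of_covered_of_separated {ι : Type*} {P : Finset ι} {f : ι → α} {F : Finset α}
    {r : ℝ} (hcov : ∀ t ∈ P, ∃ u ∈ F, dist (f t) u ≤ r)
    (hsep : ∀ t ∈ P, ∀ s ∈ P, t ≠ s → 2 * r < dist (f t) (f s)) : P.card ≤ F.card := by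
  obtain rfl | ⟨t₀, -⟩ := P.eq_empty_or_nonempty
  · simp
  have : Nonempty α := ⟨f t₀⟩
  choose! g hgF hg using hcov
  refine Finset.card_le_card_of_injOn g hgF fun t ht s hs hts => ?_
  by_contra hne
  refine (hsep t ht s hs hne).not_ge ?_
  calc dist (f t) (f s) ≤ dist (f t) (g t) + dist (f s) (g s) :=
        hts ▸ dist_triangle_right _ _ _
    _ ≤ 2 * r := by linarith [hg t ht, hg s hs]

/-- Gonzalez's bound: GMM is a 2-approximation of the optimal `n`-centre radius. -/
lemma IsFarthestFirstTraversal.exists_dist_le_two_mul {A : Set α} {c : ℕ → α} {n : ℕ}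
    (h : IsFarthestFirstTraversal A c n) {F : Finset α} {r : ℝ}
    (hcov : ∀ q ∈ A, ∃ u ∈ F, dist q u ≤ r) (hF : F.card ≤ n) :
    ∀ q ∈ A, ∃ t < n, dist q (c t) ≤ 2 * r := by
  by_contra! ⟨q, hq, hfar⟩
  have := card_le_of_covered_of_separated (P := Finset.range (n + 1))
    (fun t ht => hcov _ (h.update_mem le_rfl hq t (Finset.mem_range.1 ht)))
    (fun t ht s hs => h.dist_update_gt le_rfl hq hfar t (Finset.mem_range.1 ht) s
      (Finset.mem_range.1 hs))
  simp only [Finset.card_range] at this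
  omega

def HasDoublingDimension (α : Type*) [MetricSpace α] (D : ℕ) : Prop :=
  ∀ (x : α) (r : ℝ), ∃ F : Finset α, F.card ≤ 2 ^ D ∧
    closedBall x r ⊆ ⋃ c ∈ F, closedBall c (r / 2)

lemma HasDoublingDimension.exists_cover_div_two_pow {D : ℕ} (hD : HasDoublingDimension α D)
    (m : ℕ) (r : ℝ) (G : Finset α) :
    ∃ F : Finset α, F.card ≤ G.card * 2 ^ (D * m) ∧
      ∀ q, (∃ y ∈ G, dist q y ≤ r) → ∃ u ∈ F, dist q u ≤ r / 2 ^ m := by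
  classical
  induction m with
  | zero => exact ⟨G, by simp, by simp⟩
  | succ m ih =>
    obtain ⟨F, hFcard, hF⟩ := ih
    choose Φ hΦcard hΦ using fun y => hD y (r / 2 ^ m)
    refine ⟨F.biUnion Φ, ?_, fun q hq => ?_⟩
    · calc (F.biUnion Φ).card ≤ ∑ y ∈ F, (Φ y).card := Finset.card_biUnion_le
        _ ≤ F.card * 2 ^ D := by simpa using Finset.sum_le_sum fun y _ => hΦcard y
        _ ≤ G.card * 2 ^ (D * m) * 2 ^ D := Nat.mul_le_mul_right _ hFcard
        _ = G.card * 2 ^ (D * (m + 1)) := by ring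
    · obtain ⟨y, hyF, hqy⟩ := hF q hq
      have hq' := hΦ y (mem_closedBall.2 hqy)
      simp only [Set.mem_iUnion, mem_closedBall] at hq'
      obtain ⟨u, hu, hqu⟩ := hq'
      refine ⟨u, Finset.mem_biUnion.2 ⟨y, hyF, hu⟩, hqu.trans_eq ?_⟩
      ring

lemma exists_two_pow_mem_Icc {x : ℝ} (hx : 1 ≤ x) : ∃ m : ℕ, (2 : ℝ) ^ m ∈ Set.Icc (x / 2) x := by
  obtain ⟨m, hm, hm'⟩ := exists_nat_pow_near hx one_lt_two
  exact ⟨m, by rw [pow_succ] at hm'; linarith, hm⟩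

lemma IsFarthestFirstTraversal.exists_dist_le_of_hasDoublingDimension {D : ℕ}
    (hD : HasDoublingDimension α D) {A : Set α} {c : ℕ → α} {n : ℕ}
    (h : IsFarthestFirstTraversal A c n) {S : Finset α} (hAS : A ⊆ S) {j : ℕ} {ρ : ℝ}
    (hρ : IsOptFarness S (j + 1) ρ) {ε : ℝ} (hε : 0 < ε) (hε8 : ε ≤ 8)
    (hn : (8 / ε) ^ D * (j + 1 : ℕ) ≤ (n : ℝ)) :
    ∀ q ∈ A, ∃ t < n, dist q (c t) ≤ ε / 2 * ρ := by
  classical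
  obtain ⟨m, hm_ge, hm_le⟩ := exists_two_pow_mem_Icc (x := 8 / ε)
    (by rw [le_div_iff₀ hε]; linarith)
  have hradius : 2 * (ρ / 2 ^ m) ≤ ε / 2 * ρ := by
    have h4 : 4 ≤ ε * 2 ^ m := by
      rw [div_le_iff₀ (by norm_num), div_le_iff₀ hε] at hm_ge
      linarith
    rw [mul_div_assoc', div_le_iff₀ (by positivity)]
    nlinarith [hρ.nonneg]
  have hcount : j * 2 ^ (D * m) ≤ n := by
    have : (j : ℝ) * 2 ^ (D * m) ≤ n :=
      calc (j : ℝ) * 2 ^ (D * m) ≤ (8 / ε) ^ D * (j + 1 : ℕ) := by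
            rw [mul_comm, pow_mul']
            push_cast
            gcongr
            linarith
        _ ≤ n := hn
    exact_mod_cast this
  have hcovρ := h.exists_dist_le_of_isOptFarness hAS hρ
    ((Nat.le_mul_of_pos_right j (by positivity)).trans hcount)
  obtain ⟨F, hFcard, hF⟩ := hD.exists_cover_div_two_pow m ρ ((Finset.range j).image c)
  intro q hq
  obtain ⟨t, ht, hqt⟩ := h.exists_dist_le_two_mul (F := F) (r := ρ / 2 ^ m)
    (fun q hq => hF q (by simpa using hcovρ q hq))
    (hFcard.trans ((Nat.mul_le_mul_right _ Finset.card_image_le).trans (by simpa using hcount)))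
    q hq
  exact ⟨t, ht, hqt.trans hradius⟩

theorem stmt_10_general [DecidableEq α] (D : ℕ)
    (hdouble : ∀ (x : α) (r : ℝ), ∃ F : Finset α, F.card ≤ 2 ^ D ∧
      closedBall x r ⊆ ⋃ c ∈ F, closedBall c (r / 2))
    (ℓ k k' : ℕ) (ε' ρ : ℝ) (hε' : 0 < ε') (hε1 : ε' ≤ 1)
    (hk : 0 < k) (hk' : (8 / ε') ^ D * k ≤ (k' : ℝ))
    (Ss : Fin ℓ → Finset α) (S : Finset α)
    (hS : S = Finset.univ.biUnion Ss)
    (c : Fin ℓ → ℕ → α)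
    (hmem : ∀ i, ∀ j < k', c i j ∈ Ss i)
    (hgreedy : ∀ i, ∀ j, ∀ hj : 0 < j, j < k' → ∀ q ∈ Ss i,
      ((Finset.range j).inf' (Finset.nonempty_range_iff.mpr hj.ne')
        fun t => dist q (c i t)) ≤
      ((Finset.range j).inf' (Finset.nonempty_range_iff.mpr hj.ne')
        fun t => dist (c i j) (c i t)))
    (T : Finset α)
    (hT : T = Finset.univ.biUnion fun i => (Finset.range k').image (c i))
    (hρ : IsOptFarness S k ρ) :
    ∀ X ⊆ S, X.card = k →
      ∃ p : α → α, (∀ x ∈ X, p x ∈ T) ∧ ∀ x ∈ X, dist x (p x) ≤ (ε' / 2) * ρ := by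
  intro X hXS _
  obtain ⟨j, rfl⟩ := Nat.exists_eq_add_one_of_ne_zero hk.ne'
  have key : ∀ x ∈ S, ∃ y ∈ T, dist x y ≤ ε' / 2 * ρ := by
    intro x hx
    obtain ⟨i, -, hxi⟩ := Finset.mem_biUnion.1 (hS ▸ hx)
    have hSiS : (Ss i : Set α) ⊆ S :=
      Finset.coe_subset.2 (hS ▸ Finset.subset_biUnion_of_mem Ss (Finset.mem_univ i))
    have hgmm := isFarthestFirstTraversal_of_inf'_le (hmem i) (hgreedy i)
    obtain ⟨t, ht, hxt⟩ :=
      hgmm.exists_dist_le_of_hasDoublingDimension hdouble hSiS hρ hε' (by linarith) hk' x hxi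
    exact ⟨c i t, hT ▸ Finset.mem_biUnion.2 ⟨i, Finset.mem_univ i,
      Finset.mem_image.2 ⟨t, Finset.mem_range.2 ht, rfl⟩⟩, hxt⟩
  choose! p hpT hpd using key
  exact ⟨p, fun x hx => hpT x (hXS hx), fun x hx => hpd x (hXS hx)⟩

/-- Let `T = ⋃ᵢ GMM(Sᵢ, k')` where `S₁,…,S_ℓ` partition `S`, in a space of doubling
dimension `D`, with `k' ≥ (8/ε')^D·k`. Then any k-subset `X ⊆ S` admits a proxy
function `p : X → T` with `d(x,p(x)) ≤ (ε'/2)·ρ*_k`. -/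
theorem stmt_10 [DecidableEq α] (D : ℕ)
    (hdouble : ∀ (x : α) (r : ℝ), ∃ F : Finset α, F.card ≤ 2 ^ D ∧
      closedBall x r ⊆ ⋃ c ∈ F, closedBall c (r / 2))
    (ℓ k k' : ℕ) (ε' ρ : ℝ) (hε' : 0 < ε') (hε1 : ε' ≤ 1)
    (hk : 0 < k) (hk' : (8 / ε') ^ D * k ≤ (k' : ℝ))
    (Ss : Fin ℓ → Finset α) (S : Finset α)
    (hS : S = Finset.univ.biUnion Ss)
    (hdisj : ∀ i j, i ≠ j → Disjoint (Ss i) (Ss j))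
    (c : Fin ℓ → ℕ → α)
    (hmem : ∀ i, ∀ j < k', c i j ∈ Ss i)
    (hgreedy : ∀ i, ∀ j, ∀ hj : 0 < j, j < k' → ∀ q ∈ Ss i,
      ((Finset.range j).inf' (Finset.nonempty_range_iff.mpr hj.ne')
        fun t => dist q (c i t)) ≤
      ((Finset.range j).inf' (Finset.nonempty_range_iff.mpr hj.ne')
        fun t => dist (c i j) (c i t)))
    (T : Finset α)
    (hT : T = Finset.univ.biUnion fun i => (Finset.range k').image (c i))
    (hρ : IsOptFarness S k ρ) :
    ∀ X ⊆ S, X.card = k →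
      ∃ p : α → α, (∀ x ∈ X, p x ∈ T) ∧ ∀ x ∈ X, dist x (p x) ≤ (ε' / 2) * ρ :=
  stmt_10_general D hdouble ℓ k k' ε' ρ hε' hε1 hk hk' Ss S hS c hmem hgreedy T hT hρ
end

section
/- Let T be the union over a partition S_1,…,S_ℓ of S of GMM-EXT(S_i, k, k') with k' = (16/ε')^D·k, in a metric space of doubling dimension D, 0 < ε' ≤ 1. Then for any k-subset X ⊆ S there exists an injective function p : X → T with d(x, p(x)) ≤ (ε'/2)·ρ*_k for all x ∈ X. -/
/-!
Fix a part `Sᵢ` with greedy kernel `c 0, …, c (k' - 1)`. If some point of `Sᵢ` were farther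
than `ε'ρ/4` from every kernel point, the greedy rule would make the kernel points pairwise
farther than `ε'ρ/4` apart. But a maximal `ρ`-separated subset of `S` has fewer than `k` points
(by the definition of `ρ`) and is a `ρ`-net, so by doubling, for `8/ε' ≤ 2^m ≤ 16/ε'`, `S` is
covered by fewer than `k · 2^(Dm) ≤ k'` balls of radius `ρ/2^m ≤ ε'ρ/8`, each containing at
most one kernel point. Hence every cluster has radius at most `ε'ρ/4`. A cluster meets `X` in at most
`min(|C|, k) = |E|` points, so `X ∩ C` injects into `E`; the clusters are pairwise disjoint, so
these injections glue, and `x` and its proxy, lying in one cluster, are within `ε'ρ/2`.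
-/

open Metric

variable {α : Type*} [MetricSpace α]

open Function Finset

def HasDoublingDim (α : Type*) [MetricSpace α] (D : ℕ) : Prop :=
  ∀ (x : α) (r : ℝ), ∃ F : Finset α, F.card ≤ 2 ^ D ∧
    closedBall x r ⊆ ⋃ c ∈ F, closedBall c (r / 2)

/-- The farthest-first selection rule of GMM on `A`; membership `c j ∈ A` is not part of it. -/
def IsGreedySeq (A : Finset α) (c : ℕ → α) (n : ℕ) : Prop :=
  ∀ j, ∀ hj : 0 < j, j < n → ∀ q ∈ A,
    ((range j).inf' (nonempty_range_iff.mpr hj.ne') fun t => dist q (c t)) ≤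
      ((range j).inf' (nonempty_range_iff.mpr hj.ne') fun t => dist (c j) (c t))

theorem exists_le_two_pow_le_two_mul {x : ℝ} (hx : 1 ≤ x) :
    ∃ m : ℕ, x ≤ 2 ^ m ∧ (2 : ℝ) ^ m ≤ 2 * x := by
  obtain ⟨n, hnx, hxn⟩ := exists_nat_pow_near hx one_lt_two
  exact ⟨n + 1, hxn.le, by rw [pow_succ']; linarith⟩

theorem HasDoublingDim.exists_cover_closedBall {D : ℕ} (h : HasDoublingDim α D) (m : ℕ)
    (x : α) (r : ℝ) : ∃ F : Finset α, F.card ≤ 2 ^ (D * m) ∧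
      closedBall x r ⊆ ⋃ c ∈ F, closedBall c (r / 2 ^ m) := by
  classical
  induction m with
  | zero => exact ⟨{x}, by simp, by simp⟩
  | succ m ih =>
    obtain ⟨F, hFcard, hFcov⟩ := ih
    choose G hGcard hGcov using fun c : α => h c (r / 2 ^ m)
    refine ⟨F.biUnion G, ?_, fun y hy => ?_⟩
    · calc (F.biUnion G).card ≤ F.card * 2 ^ D :=
            card_biUnion_le_card_mul _ _ _ fun a _ => hGcard a
        _ ≤ 2 ^ (D * m) * 2 ^ D := Nat.mul_le_mul_right _ hFcard
        _ = 2 ^ (D * (m + 1)) := by rw [← pow_add, mul_add_one]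
    · obtain ⟨c, hc, hyc⟩ := Set.mem_iUnion₂.mp (hFcov hy)
      obtain ⟨d, hd, hyd⟩ := Set.mem_iUnion₂.mp (hGcov c hyc)
      rw [div_div, ← pow_succ] at hyd
      exact Set.mem_iUnion₂.mpr ⟨d, mem_biUnion.mpr ⟨c, hc, hd⟩, hyd⟩

/-- A maximal `ρ`-separated subset of `S` is a `ρ`-net of `S`. -/
theorem exists_net_card_lt {S : Finset α} {k : ℕ} {ρ : ℝ} (hρ0 : 0 ≤ ρ)
    (hρ : ∀ U ⊆ S, U.card = k → ∃ x ∈ U, ∃ y ∈ U, x ≠ y ∧ dist x y ≤ ρ) :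
    ∃ V ⊆ S, V.card < k ∧ ∀ q ∈ S, ∃ v ∈ V, dist q v ≤ ρ := by
  classical
  obtain ⟨V, hV, hmax⟩ := exists_max_image
    (S.powerset.filter fun V : Finset α => (V : Set α).Pairwise fun x y => ρ < dist x y) card
    ⟨∅, by simp⟩
  rw [mem_filter, mem_powerset] at hV
  refine ⟨V, hV.1, ?_, fun q hq => ?_⟩
  · by_contra! hkV
    obtain ⟨U, hUV, hU⟩ := exists_subset_card_eq hkV
    obtain ⟨x, hx, y, hy, hxy, hd⟩ := hρ U (hUV.trans hV.1) hU
    exact hd.not_gt (hV.2 (hUV hx) (hUV hy) hxy)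
  · by_contra! hfar
    have hqV : q ∉ V := fun h => by simpa using (hfar q h).trans_le' hρ0
    have hins := hmax (insert q V) <| by
      rw [mem_filter, mem_powerset, coe_insert, Set.pairwise_insert]
      refine ⟨insert_subset hq hV.1, hV.2, fun v hv _ => ⟨hfar v hv, ?_⟩⟩
      rw [dist_comm]
      exact hfar v hv
    rw [card_insert_of_notMem hqV] at hins
    omega

theorem exists_cover_card_lt {D : ℕ} (hD : HasDoublingDim α D) {S : Finset α} {k : ℕ}
    {ρ : ℝ} (hρ0 : 0 ≤ ρ)
    (hρ : ∀ U ⊆ S, U.card = k → ∃ x ∈ U, ∃ y ∈ U, x ≠ y ∧ dist x y ≤ ρ) (m : ℕ) :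
    ∃ G : Finset α, G.card < k * 2 ^ (D * m) ∧ ∀ q ∈ S, ∃ g ∈ G, dist q g ≤ ρ / 2 ^ m := by
  classical
  obtain ⟨V, -, hVcard, hVcov⟩ := exists_net_card_lt hρ0 hρ
  choose F hFcard hFcov using fun v => hD.exists_cover_closedBall m v ρ
  refine ⟨V.biUnion F, ?_, fun q hq => ?_⟩
  · calc (V.biUnion F).card ≤ V.card * 2 ^ (D * m) :=
          card_biUnion_le_card_mul _ _ _ fun v _ => hFcard v
      _ < k * 2 ^ (D * m) := Nat.mul_lt_mul_of_pos_right hVcard (by positivity)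
  · obtain ⟨v, hv, hqv⟩ := hVcov q hq
    obtain ⟨g, hg, hqg⟩ := Set.mem_iUnion₂.mp (hFcov v (mem_closedBall.mpr hqv))
    exact ⟨g, mem_biUnion.mpr ⟨v, hv, hg⟩, hqg⟩

theorem card_le_of_forall_lt_dist {c : ℕ → α} {n : ℕ} {F : Finset α} {s : ℝ}
    (hsep : ∀ t < n, ∀ u < n, t ≠ u → 2 * s < dist (c t) (c u))
    (hcov : ∀ t < n, ∃ f ∈ F, dist (c t) f ≤ s) : n ≤ F.card := by
  have : Nonempty α := ⟨c 0⟩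
  choose! g hgF hg using hcov
  refine le_card_of_inj_on_range g hgF fun t ht u hu htu => ?_
  by_contra hne
  have hgu := hg u hu
  rw [← htu] at hgu
  linarith [hsep t ht u hu hne, hg t ht, dist_triangle_right (c t) (c u) (g t)]

theorem IsGreedySeq.lt_dist {A : Finset α} {c : ℕ → α} {n : ℕ} (hc : IsGreedySeq A c n)
    {q : α} (hq : q ∈ A) {r : ℝ} (hfar : ∀ t < n, r < dist q (c t)) :
    ∀ t < n, ∀ u < n, t ≠ u → r < dist (c t) (c u) := by
  suffices h : ∀ t u, t < u → u < n → r < dist (c u) (c t) by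
    intro t ht u hu htu
    rcases htu.lt_or_gt with htu | htu
    · exact dist_comm (c t) (c u) ▸ h t u htu hu
    · exact h u t htu ht
  intro t u htu hu
  have hu0 : 0 < u := (Nat.zero_le t).trans_lt htu
  calc r < (range u).inf' (nonempty_range_iff.mpr hu0.ne') (fun t => dist q (c t)) :=
        (lt_inf'_iff _).2 fun t ht => hfar t ((mem_range.1 ht).trans hu)
    _ ≤ _ := hc u hu0 hu q hq
    _ ≤ dist (c u) (c t) := inf'_le _ (mem_range.2 htu)

theorem IsGreedySeq.exists_dist_le {D : ℕ} (hD : HasDoublingDim α D) {S A : Finset α}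
    {k n : ℕ} {ρ ε : ℝ} (hρ0 : 0 ≤ ρ)
    (hρ : ∀ U ⊆ S, U.card = k → ∃ x ∈ U, ∃ y ∈ U, x ≠ y ∧ dist x y ≤ ρ)
    (hε : 0 < ε) (hε1 : ε ≤ 1) (hn : (16 / ε) ^ D * k ≤ (n : ℝ))
    {c : ℕ → α} (hc : IsGreedySeq A c n) (hcS : ∀ t < n, c t ∈ S) {q : α} (hq : q ∈ A) :
    ∃ t < n, dist q (c t) ≤ ε * ρ / 4 := by
  by_contra! hfar
  obtain ⟨m, hm8, hm16⟩ :=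
    exists_le_two_pow_le_two_mul (x := 8 / ε) (by rw [le_div_iff₀ hε]; linarith)
  obtain ⟨G, hGcard, hGcov⟩ := exists_cover_card_lt hD hρ0 hρ m
  have hs : 2 * (ρ / 2 ^ m) ≤ ε * ρ / 4 := by
    rw [div_le_iff₀ hε] at hm8
    rw [mul_div_assoc', div_le_iff₀ (by positivity)]
    nlinarith
  have hnG : n ≤ G.card := card_le_of_forall_lt_dist
    (fun t ht u hu htu => hs.trans_lt (hc.lt_dist hq hfar t ht u hu htu))
    (fun t ht => hGcov _ (hcS t ht))
  have hkn : ((k * 2 ^ (D * m) : ℕ) : ℝ) ≤ n :=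
    calc ((k * 2 ^ (D * m) : ℕ) : ℝ) = ((2 : ℝ) ^ m) ^ D * k := by push_cast; ring
      _ ≤ (2 * (8 / ε)) ^ D * k := by gcongr
      _ = (16 / ε) ^ D * k := by ring
      _ ≤ n := hn
  exact (hnG.trans_lt hGcard).not_ge (by exact_mod_cast hkn)

theorem pairwise_disjoint_cells {β ι : Type*} {n : ℕ} {Ss : ι → Finset β}
    {Cl : ι → ℕ → Finset β} (hdisj : Pairwise (Disjoint on Ss))
    (hClsub : ∀ i, ∀ j < n, Cl i j ⊆ Ss i)
    (hClpart : ∀ i, ∀ q ∈ Ss i, ∃! j, j < n ∧ q ∈ Cl i j) :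
    Pairwise (Disjoint on fun ij : ι × Fin n => Cl ij.1 ij.2) := by
  rintro ⟨i, j⟩ ⟨i', j'⟩ hne
  refine disjoint_left.2 fun q hq hq' => ?_
  obtain rfl : i = i' := by
    by_contra h
    exact disjoint_left.1 (hdisj h) (hClsub _ _ j.2 hq) (hClsub _ _ j'.2 hq')
  have hjj' := (hClpart i q (hClsub _ _ j.2 hq)).unique ⟨j.2, hq⟩ ⟨j'.2, hq'⟩
  exact hne (Prod.ext rfl (Fin.ext hjj'))

theorem exists_injOn_of_card_inter_le {β ι : Type*} [DecidableEq β] {X : Finset β}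
    {C E : ι → Finset β} (hE : Pairwise (Disjoint on E)) (hcov : ∀ x ∈ X, ∃ i, x ∈ C i)
    (hcard : ∀ i, (X ∩ C i).card ≤ (E i).card) :
    ∃ p : β → β, Set.InjOn p X ∧ ∀ x ∈ X, ∃ i, x ∈ C i ∧ p x ∈ E i := by
  rcases isEmpty_or_nonempty β with hβ | hβ
  · exact ⟨id, fun x => isEmptyElim x, fun x => isEmptyElim x⟩
  have hf : ∀ i, ∃ f : β → β, Set.MapsTo f ↑(X ∩ C i) ↑(E i) ∧ Set.InjOn f ↑(X ∩ C i) := by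
    intro i
    refine (X ∩ C i).finite_toSet.exists_injOn_of_encard_le (β := β) (t := E i) ?_
    simpa only [Set.encard_coe_eq_coe_finsetCard, Nat.cast_le] using hcard i
  choose f hfE hfinj using hf
  choose κ hκ using hcov
  have hpE : ∀ x (hx : x ∈ X), f (κ x hx) x ∈ E (κ x hx) := fun x hx =>
    hfE _ (mem_inter.2 ⟨hx, hκ x hx⟩)
  refine ⟨fun x => if hx : x ∈ X then f (κ x hx) x else x, fun x hx y hy hxy => ?_,
    fun x hx => ⟨κ x hx, hκ x hx, by simpa only [dif_pos hx] using hpE x hx⟩⟩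
  rw [mem_coe] at hx hy
  simp only [dif_pos hx, dif_pos hy] at hxy
  have hκxy : κ x hx = κ y hy := by
    by_contra h
    exact disjoint_left.1 (hE h) (hpE x hx) (hxy ▸ hpE y hy)
  rw [← hκxy] at hxy
  exact hfinj _ (mem_inter.2 ⟨hx, hκ x hx⟩) (mem_inter.2 ⟨hy, hκxy ▸ hκ y hy⟩) hxy

theorem stmt_11_general [DecidableEq α] (D : ℕ)
    (hdouble : ∀ (x : α) (r : ℝ), ∃ F : Finset α, F.card ≤ 2 ^ D ∧
      closedBall x r ⊆ ⋃ c ∈ F, closedBall c (r / 2))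
    (ℓ k k' : ℕ) (ε' ρ : ℝ) (hε' : 0 < ε') (hε1 : ε' ≤ 1)
    (hk' : (16 / ε') ^ D * k ≤ (k' : ℝ))
    (Ss : Fin ℓ → Finset α) (S : Finset α)
    (hS : S = Finset.univ.biUnion Ss)
    (hdisj : ∀ i j, i ≠ j → Disjoint (Ss i) (Ss j))
    (c : Fin ℓ → ℕ → α)
    (hmem : ∀ i, ∀ j < k', c i j ∈ Ss i)
    (hgreedy : ∀ i, ∀ j, ∀ hj : 0 < j, j < k' → ∀ q ∈ Ss i,
      ((Finset.range j).inf' (Finset.nonempty_range_iff.mpr hj.ne')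
        fun t => dist q (c i t)) ≤
      ((Finset.range j).inf' (Finset.nonempty_range_iff.mpr hj.ne')
        fun t => dist (c i j) (c i t)))
    (Cl E : Fin ℓ → ℕ → Finset α)
    (hClsub : ∀ i, ∀ j < k', Cl i j ⊆ Ss i)
    (hClpart : ∀ i, ∀ q ∈ Ss i, ∃! j, j < k' ∧ q ∈ Cl i j)
    (hClnear : ∀ i, ∀ j < k', ∀ q ∈ Cl i j, ∀ j' < k', dist q (c i j) ≤ dist q (c i j'))
    (hEsub : ∀ i, ∀ j < k', E i j ⊆ Cl i j)
    (hEcard : ∀ i, ∀ j < k', (E i j).card = min (Cl i j).card k)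
    (T : Finset α)
    (hT : T = Finset.univ.biUnion fun i => (Finset.range k').biUnion fun j => E i j)
    (hρ : IsOptFarness S k ρ) :
    ∀ X ⊆ S, X.card = k →
      ∃ p : α → α, Set.InjOn p ↑X ∧ (∀ x ∈ X, p x ∈ T) ∧
        ∀ x ∈ X, dist x (p x) ≤ (ε' / 2) * ρ := by
  intro X hXS hXcard
  obtain ⟨a, -, b, -, -, hab⟩ := hρ.2 X hXS hXcard
  have hSsS : ∀ i, Ss i ⊆ S := fun i => hS ▸ subset_biUnion_of_mem Ss (mem_univ i)
  have hnear : ∀ i, ∀ j < k', ∀ q ∈ Cl i j, dist q (c i j) ≤ ε' * ρ / 4 := by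
    intro i j hj q hq
    obtain ⟨t, ht, hqt⟩ := IsGreedySeq.exists_dist_le hdouble (dist_nonneg.trans hab) hρ.2
      hε' hε1 hk' (hgreedy i) (fun t ht => hSsS i (hmem i t ht)) (hClsub i j hj hq)
    exact (hClnear i j hj q hq t ht).trans hqt
  obtain ⟨p, hpinj, hp⟩ := exists_injOn_of_card_inter_le (X := X)
    (C := fun ij : Fin ℓ × Fin k' => Cl ij.1 ij.2) (E := fun ij => E ij.1 ij.2)
    (fun ij ij' hne => (pairwise_disjoint_cells hdisj hClsub hClpart hne).mono
      (hEsub _ _ ij.2.2) (hEsub _ _ ij'.2.2))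
    (fun x hx => by
      obtain ⟨i, -, hxi⟩ := mem_biUnion.1 (hS ▸ hXS hx)
      obtain ⟨j, ⟨hj, hxj⟩, -⟩ := hClpart i x hxi
      exact ⟨(i, ⟨j, hj⟩), hxj⟩)
    (fun ij => by
      rw [hEcard _ _ ij.2.2]
      exact le_min (card_le_card inter_subset_right) (hXcard ▸ card_le_card inter_subset_left))
  refine ⟨p, hpinj, fun x hx => ?_, fun x hx => ?_⟩ <;>
    obtain ⟨⟨i, j, hj⟩, hxC, hpE⟩ := hp x hx
  · rw [hT]
    exact mem_biUnion.2 ⟨i, mem_univ i, mem_biUnion.2 ⟨j, mem_range.2 hj, hpE⟩⟩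
  · calc dist x (p x) ≤ dist x (c i j) + dist (p x) (c i j) := dist_triangle_right _ _ _
      _ ≤ ε' * ρ / 4 + ε' * ρ / 4 :=
        add_le_add (hnear i j hj x hxC) (hnear i j hj _ (hEsub i j hj hpE))
      _ = ε' / 2 * ρ := by ring

/-- Let `T = ⋃ᵢ GMM-EXT(Sᵢ, k, k')` where `S₁,…,S_ℓ` partition `S`, in a space of
doubling dimension `D`, with `k' ≥ (16/ε')^D·k`: each part `Sᵢ` is clustered around
its greedy kernel `c i 0,…,c i (k'-1)` by nearest kernel point, and `E i j` retains
`min(|C i j|, k)` points of cluster `C i j`. Then any k-subset `X ⊆ S` admits an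
injective proxy `p : X → T` with `d(x,p(x)) ≤ (ε'/2)·ρ*_k`. -/
theorem stmt_11 [DecidableEq α] (D : ℕ)
    (hdouble : ∀ (x : α) (r : ℝ), ∃ F : Finset α, F.card ≤ 2 ^ D ∧
      closedBall x r ⊆ ⋃ c ∈ F, closedBall c (r / 2))
    (ℓ k k' : ℕ) (ε' ρ : ℝ) (hε' : 0 < ε') (hε1 : ε' ≤ 1)
    (hk : 0 < k) (hk' : (16 / ε') ^ D * k ≤ (k' : ℝ))
    (Ss : Fin ℓ → Finset α) (S : Finset α)
    (hS : S = Finset.univ.biUnion Ss)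
    (hdisj : ∀ i j, i ≠ j → Disjoint (Ss i) (Ss j))
    (c : Fin ℓ → ℕ → α)
    (hmem : ∀ i, ∀ j < k', c i j ∈ Ss i)
    (hgreedy : ∀ i, ∀ j, ∀ hj : 0 < j, j < k' → ∀ q ∈ Ss i,
      ((Finset.range j).inf' (Finset.nonempty_range_iff.mpr hj.ne')
        fun t => dist q (c i t)) ≤
      ((Finset.range j).inf' (Finset.nonempty_range_iff.mpr hj.ne')
        fun t => dist (c i j) (c i t)))
    (Cl E : Fin ℓ → ℕ → Finset α)
    (hClsub : ∀ i, ∀ j < k', Cl i j ⊆ Ss i)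
    (hClpart : ∀ i, ∀ q ∈ Ss i, ∃! j, j < k' ∧ q ∈ Cl i j)
    (hClnear : ∀ i, ∀ j < k', ∀ q ∈ Cl i j, ∀ j' < k', dist q (c i j) ≤ dist q (c i j'))
    (hEsub : ∀ i, ∀ j < k', E i j ⊆ Cl i j)
    (hEcard : ∀ i, ∀ j < k', (E i j).card = min (Cl i j).card k)
    (T : Finset α)
    (hT : T = Finset.univ.biUnion fun i => (Finset.range k').biUnion fun j => E i j)
    (hρ : IsOptFarness S k ρ) :
    ∀ X ⊆ S, X.card = k →
      ∃ p : α → α, Set.InjOn p ↑X ∧ (∀ x ∈ X, p x ∈ T) ∧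
        ∀ x ∈ X, dist x (p x) ≤ (ε' / 2) * ρ :=
  stmt_11_general D hdouble ℓ k k' ε' ρ hε' hε1 hk' Ss S hS hdisj c hmem hgreedy Cl E hClsub hClpart
    hClnear hEsub hEcard T hT hρ
end
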